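/- For every probability vector π on K that is invariant for M (i.e., πM = π), the trajectory δ ↦ V_δ(π) is non-increasing on [0,1): for all δ₁, δ₂ with 0 ≤ δ₁ ≤ δ₂ < 1 one has V_{δ₂}(π) ≤ V_{δ₁}(π). -/

import Mathlib

open scoped BigOperators

noncomputable section

/-- A row-stochastic matrix: nonnegative entries, rows summing to 1. -/
def IsStochastic {K : Type*} [Fintype K] (M : Matrix K K ℝ) : Prop :=
  (∀ i j, 0 ≤ M i j) ∧ ∀ i, ∑ j, M i j = 1

/-- The total probability `χ(ξ)[i]` of action `i` under belief `ξ` and one-stage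
strategy `χ`. -/
def actionProb {K I : Type*} [Fintype K] (ξ : K → ℝ) (χ : K → I → ℝ) (i : I) : ℝ :=
  ∑ ℓ, ξ ℓ * χ ℓ i

/-- The posterior belief `ξ(χ,i)` of Player 2 upon observing action `i`
(junk value when `χ(ξ)[i] = 0`, in which case its weight in the Bellman
equation vanishes). -/
def posterior {K I : Type*} [Fintype K] (ξ : K → ℝ) (χ : K → I → ℝ) (i : I) (ℓ : K) : ℝ :=
  ξ ℓ * χ ℓ i / actionProb ξ χ i

/-- The one-stage payoff `r(ξ,χ)`: Player 2's best response payoff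
`min_j Σ_ℓ ξ^ℓ Σ_i χ^ℓ[i] G^ℓ(i,j)`. -/
def onestagePayoff {K I J : Type*} [Fintype K] [Fintype I] [Fintype J] [Nonempty J]
    (G : K → I → J → ℝ) (ξ : K → ℝ) (χ : K → I → ℝ) : ℝ :=
  ⨅ j : J, ∑ ℓ, ξ ℓ * ∑ i, χ ℓ i * G ℓ i j

/-- `V` is the family of δ-discounted values of the Markov chain game:
for each `δ ∈ [0,1)`, `V δ` is bounded between `0` and `C = ‖G‖∞` on `Δ(K)` and
satisfies the Bellman equation there. -/
def IsGameValueFamily {K I J : Type*} [Fintype K] [Fintype I] [Fintype J] [Nonempty J]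
    (M : Matrix K K ℝ) (G : K → I → J → ℝ) (C : ℝ) (V : ℝ → (K → ℝ) → ℝ) : Prop :=
  ∀ δ ∈ Set.Ico (0 : ℝ) 1,
    (∀ ξ ∈ stdSimplex ℝ K, 0 ≤ V δ ξ ∧ V δ ξ ≤ C) ∧
    ∀ ξ ∈ stdSimplex ℝ K,
      V δ ξ = sSup { x : ℝ | ∃ χ : K → I → ℝ, (∀ ℓ, χ ℓ ∈ stdSimplex ℝ I) ∧
        x = (1 - δ) * onestagePayoff G ξ χ +
            δ * ∑ i, actionProb ξ χ i * V δ (Matrix.vecMul (posterior ξ χ i) M) }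

/-!
Write `Φ_δ = bellman M G δ` for the Bellman operator and `Ψ = Φ_1`, which keeps only the
continuation payoff. In terms of the joint law `τ` of state and action, the stage value is
concave and positively homogeneous in `τ` (its continuation part is a sum of perspectives of a
concave function), and any mixture of joint laws is again the joint law of a strategy. Hence `Φ_δ` preserves concavity on
`Δ(K)`, so `V_δ` is concave as a uniform limit of value iterates, and Jensen's inequality gives
`Ψ f π ≤ f (π M) = f π` for concave `f` and invariant `π`.

For `δ₁ ≤ δ₂` put `e = (δ₂ - δ₁) / (1 - δ₁)`. Since `Φ_{δ₁} V_{δ₁} ≤ V_{δ₁}`,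
`Φ_{δ₂} ((1 - e) V_{δ₁} + e k) ≤ (1 - e) V_{δ₁} + e Ψ ((1 - δ₂) V_{δ₁} + δ₂ k)`.
Iterating `k ↦ Ψ ((1 - δ₂) V_{δ₁} + δ₂ k)` from the constant `C` gives a decreasing sequence of
concave functions `k_m` (`revelationIterate`), so every `(1 - e) V_{δ₁} + e k_m` is a
super-solution of `Φ_{δ₂}` and dominates `V_{δ₂}` by the comparison principle. At `π`, Jensen gives
`k_m π ≤ V_{δ₁} π + δ₂ ^ m C`, and `m → ∞` yields `V_{δ₂} π ≤ V_{δ₁} π`.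
-/

open Set

theorem le_of_forall_le_add_pow_mul {x y δ B : ℝ} (hδ₀ : 0 ≤ δ) (hδ₁ : δ < 1)
    (h : ∀ n : ℕ, x ≤ y + δ ^ n * B) : x ≤ y := by
  have hlim : Filter.Tendsto (fun n : ℕ => y + δ ^ n * B) Filter.atTop (nhds y) := by
    simpa using tendsto_const_nhds.add
      ((tendsto_pow_atTop_nhds_zero_of_lt_one hδ₀ hδ₁).mul_const B)
  exact ge_of_tendsto' hlim h

theorem ConcaveOn.of_forall_abs_sub_le {E : Type*} [AddCommGroup E] [Module ℝ E] {s : Set E}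
    {W : E → ℝ} {F : ℕ → E → ℝ} {δ B : ℝ} (hδ₀ : 0 ≤ δ) (hδ₁ : δ < 1)
    (hF : ∀ n, ConcaveOn ℝ s (F n)) (hWF : ∀ n, ∀ x ∈ s, |W x - F n x| ≤ δ ^ n * B) :
    ConcaveOn ℝ s W := by
  refine ⟨(hF 0).1, fun x hx y hy a b ha hb hab => ?_⟩
  have hz := (hF 0).1 hx hy ha hb hab
  refine le_of_forall_le_add_pow_mul hδ₀ hδ₁ (B := 2 * B) fun n => ?_
  have hx' := (abs_sub_le_iff.1 (hWF n x hx)).1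
  have hy' := (abs_sub_le_iff.1 (hWF n y hy)).1
  have hz' := (abs_sub_le_iff.1 (hWF n _ hz)).2
  have hFn := (hF n).2 hx hy ha hb hab
  simp only [smul_eq_mul] at hFn ⊢
  have hax := mul_le_mul_of_nonneg_left hx' ha
  have hby := mul_le_mul_of_nonneg_left hy' hb
  linear_combination hFn + hz' + hax + hby + (δ ^ n * B) * hab

theorem Real.mul_sSup_add_mul_sSup_le {s t : Set ℝ} (hs : s.Nonempty) (ht : t.Nonempty)
    {a b B : ℝ} (ha : 0 ≤ a) (hb : 0 ≤ b) (h : ∀ x ∈ s, ∀ y ∈ t, a * x + b * y ≤ B) :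
    a * sSup s + b * sSup t ≤ B := by
  have hs' : ∀ y ∈ t, a * sSup s ≤ B - b * y := fun y hy => by
    rw [← smul_eq_mul, ← Real.sSup_smul_of_nonneg ha]
    refine csSup_le hs.smul_set ?_
    rintro _ ⟨x, hx, rfl⟩
    linarith [h x hx y hy, smul_eq_mul a x]
  have ht' : b * sSup t ≤ B - a * sSup s := by
    rw [← smul_eq_mul, ← Real.sSup_smul_of_nonneg hb]
    refine csSup_le ht.smul_set ?_
    rintro _ ⟨y, hy, rfl⟩
    linarith [hs' y hy, smul_eq_mul b y]
  linarith

theorem Set.MapsTo.convex_comb_Icc {α : Type*} {s : Set α} {f g : α → ℝ} {B e : ℝ}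
    (hf : MapsTo f s (Icc 0 B)) (hg : MapsTo g s (Icc 0 B)) (he₀ : 0 ≤ e) (he₁ : e ≤ 1) :
    MapsTo (fun x => (1 - e) * f x + e * g x) s (Icc 0 B) := fun _ hx =>
  convex_Icc 0 B (hf hx) (hg hx) (sub_nonneg.2 he₁) he₀ (sub_add_cancel 1 e)

section Perspective

variable {K : Type*} [Fintype K]

def perspective (g : (K → ℝ) → ℝ) (u : K → ℝ) : ℝ :=
  (∑ k, u k) * g ((∑ k, u k)⁻¹ • u)

theorem inv_sum_smul_mem_stdSimplex {u : K → ℝ} (hu : 0 ≤ u) (hs : 0 < ∑ k, u k) :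
    (∑ k, u k)⁻¹ • u ∈ stdSimplex ℝ K :=
  ⟨fun k => mul_nonneg (inv_nonneg.2 hs.le) (hu k), by
    simp only [Pi.smul_apply, smul_eq_mul, ← Finset.mul_sum, inv_mul_cancel₀ hs.ne']⟩

theorem perspective_zero (g : (K → ℝ) → ℝ) : perspective g 0 = 0 := by
  simp [perspective]

theorem perspective_of_mem_stdSimplex (g : (K → ℝ) → ℝ) {ξ : K → ℝ}
    (hξ : ξ ∈ stdSimplex ℝ K) : perspective g ξ = g ξ := by
  simp [perspective, hξ.2]

theorem perspective_smul (g : (K → ℝ) → ℝ) {c : ℝ} (hc : 0 ≤ c) (u : K → ℝ) :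
    perspective g (c • u) = c * perspective g u := by
  rcases hc.eq_or_lt with rfl | hc
  · simp [perspective]
  have hsum : ∑ k, (c • u) k = c * ∑ k, u k := by simp [Finset.mul_sum]
  have hnorm : (c * ∑ k, u k)⁻¹ • (c • u) = (∑ k, u k)⁻¹ • u := by
    rw [smul_smul, mul_inv, mul_comm c⁻¹, mul_assoc, inv_mul_cancel₀ hc.ne', mul_one]
  rw [perspective, perspective, hsum, hnorm, mul_assoc]

theorem perspective_le_perspective_add {g h : (K → ℝ) → ℝ} {B : ℝ}
    (hgh : ∀ η ∈ stdSimplex ℝ K, g η ≤ h η + B) {u : K → ℝ} (hu : 0 ≤ u) :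
    perspective g u ≤ perspective h u + (∑ k, u k) * B := by
  rcases (Fintype.sum_nonneg hu).eq_or_lt with hs | hs
  · simp [perspective, ← hs]
  rw [perspective, perspective, ← mul_add]
  exact mul_le_mul_of_nonneg_left (hgh _ (inv_sum_smul_mem_stdSimplex hu hs)) hs.le

theorem ConcaveOn.perspective_add_le {g : (K → ℝ) → ℝ} (hg : ConcaveOn ℝ (stdSimplex ℝ K) g)
    {u v : K → ℝ} (hu : 0 ≤ u) (hv : 0 ≤ v) :
    perspective g u + perspective g v ≤ perspective g (u + v) := by
  rcases (Fintype.sum_nonneg hu).eq_or_lt with hs | hs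
  · simp [(Fintype.sum_eq_zero_iff_of_nonneg hu).1 hs.symm, perspective_zero]
  rcases (Fintype.sum_nonneg hv).eq_or_lt with ht | ht
  · simp [(Fintype.sum_eq_zero_iff_of_nonneg hv).1 ht.symm, perspective_zero]
  set s := ∑ k, u k
  set t := ∑ k, v k
  have hst : ∑ k, (u + v) k = s + t := Finset.sum_add_distrib
  have hmix : (s / (s + t)) • (s⁻¹ • u) + (t / (s + t)) • (t⁻¹ • v) = (s + t)⁻¹ • (u + v) := by
    ext k
    simp only [Pi.add_apply, Pi.smul_apply, smul_eq_mul]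
    field_simp
  have key := hg.2 (inv_sum_smul_mem_stdSimplex hu hs) (inv_sum_smul_mem_stdSimplex hv ht)
    (div_nonneg hs.le (add_pos hs ht).le) (div_nonneg ht.le (add_pos hs ht).le)
    (by field_simp)
  rw [hmix, smul_eq_mul, smul_eq_mul] at key
  rw [perspective, perspective, perspective, hst]
  calc s * g (s⁻¹ • u) + t * g (t⁻¹ • v)
      = (s + t) * (s / (s + t) * g (s⁻¹ • u) + t / (s + t) * g (t⁻¹ • v)) := by
        field_simp
    _ ≤ (s + t) * g ((s + t)⁻¹ • (u + v)) := by gcongr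

theorem ConcaveOn.sum_perspective_le {ι : Type*} {g : (K → ℝ) → ℝ}
    (hg : ConcaveOn ℝ (stdSimplex ℝ K) g) (s : Finset ι) {u : ι → K → ℝ}
    (hu : ∀ i ∈ s, 0 ≤ u i) :
    ∑ i ∈ s, perspective g (u i) ≤ perspective g (∑ i ∈ s, u i) := by
  induction s using Finset.cons_induction with
  | empty => simp [perspective_zero]
  | cons a s ha ih =>
    rw [Finset.sum_cons, Finset.sum_cons]
    have hs : ∀ i ∈ s, 0 ≤ u i := fun i hi => hu i (Finset.mem_cons_of_mem hi)
    exact (add_le_add le_rfl (ih hs)).trans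
      (hg.perspective_add_le (hu a (Finset.mem_cons_self a s)) (Finset.sum_nonneg hs))

end Perspective

section Stochastic

variable {K : Type*} [Fintype K]

theorem IsStochastic.vecMul_mem_stdSimplex {M : Matrix K K ℝ} (hM : IsStochastic M) {ξ : K → ℝ}
    (hξ : ξ ∈ stdSimplex ℝ K) : Matrix.vecMul ξ M ∈ stdSimplex ℝ K := by
  refine ⟨fun j => Finset.sum_nonneg fun ℓ _ => mul_nonneg (hξ.1 ℓ) (hM.1 ℓ j), ?_⟩
  simp only [Matrix.vecMul, dotProduct]
  rw [Finset.sum_comm]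
  simp only [← Finset.mul_sum, hM.2, mul_one, hξ.2]

theorem ConcaveOn.comp_vecMul {M : Matrix K K ℝ} (hM : IsStochastic M) {f : (K → ℝ) → ℝ}
    (hf : ConcaveOn ℝ (stdSimplex ℝ K) f) :
    ConcaveOn ℝ (stdSimplex ℝ K) fun η => f (Matrix.vecMul η M) :=
  (hf.comp_linearMap (Matrix.vecMulLinear M)).subset
    (fun _ hη => hM.vecMul_mem_stdSimplex hη) (convex_stdSimplex ℝ K)

end Stochastic

namespace MarkovChainGame

section JointLaw

variable {K I : Type*} [Fintype I]

/-- `jointLaw ξ χ i ℓ` is the probability of state `ℓ` and action `i`; it is indexed by the action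
first, so that `jointLaw ξ χ i` is the unnormalised posterior after action `i`. -/
def jointLaw (ξ : K → ℝ) (χ : K → I → ℝ) (i : I) (ℓ : K) : ℝ := ξ ℓ * χ ℓ i

theorem jointLaw_nonneg [Fintype K] {ξ : K → ℝ} {χ : K → I → ℝ} (hξ : ξ ∈ stdSimplex ℝ K)
    (hχ : ∀ ℓ, χ ℓ ∈ stdSimplex ℝ I) (i : I) : 0 ≤ jointLaw ξ χ i :=
  fun ℓ => mul_nonneg (hξ.1 ℓ) ((hχ ℓ).1 i)

theorem sum_jointLaw {ξ : K → ℝ} {χ : K → I → ℝ} (hχ : ∀ ℓ, χ ℓ ∈ stdSimplex ℝ I) :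
    ∑ i, jointLaw ξ χ i = ξ := by
  ext ℓ
  simp only [Finset.sum_apply, jointLaw, ← Finset.mul_sum, (hχ ℓ).2, mul_one]

theorem sum_sum_jointLaw [Fintype K] {ξ : K → ℝ} {χ : K → I → ℝ} (hξ : ξ ∈ stdSimplex ℝ K)
    (hχ : ∀ ℓ, χ ℓ ∈ stdSimplex ℝ I) : ∑ i, ∑ ℓ, jointLaw ξ χ i ℓ = 1 := by
  rw [Finset.sum_comm]
  simp only [← Finset.sum_apply, sum_jointLaw hχ, hξ.2]

theorem exists_strategy [Nonempty I] : ∃ χ : K → I → ℝ, ∀ ℓ, χ ℓ ∈ stdSimplex ℝ I := by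
  classical
  obtain ⟨i₀⟩ := ‹Nonempty I›
  exact ⟨fun _ => Pi.single i₀ 1, fun _ => single_mem_stdSimplex ℝ i₀⟩

theorem exists_jointLaw_eq [Nonempty I] {τ : I → K → ℝ} (hτ : ∀ i, 0 ≤ τ i) :
    ∃ χ : K → I → ℝ, (∀ ℓ, χ ℓ ∈ stdSimplex ℝ I) ∧ jointLaw (∑ i, τ i) χ = τ := by
  classical
  obtain ⟨i₀⟩ := ‹Nonempty I›
  set ξ := ∑ i, τ i
  have hξ : ∀ ℓ, ξ ℓ = ∑ i, τ i ℓ := fun ℓ => Finset.sum_apply ℓ _ _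
  refine ⟨fun ℓ => if ξ ℓ = 0 then Pi.single i₀ 1 else (ξ ℓ)⁻¹ • fun i => τ i ℓ,
    fun ℓ => ?_, ?_⟩
  · dsimp only
    split_ifs with h
    · exact single_mem_stdSimplex ℝ i₀
    · rw [hξ] at h ⊢
      exact inv_sum_smul_mem_stdSimplex (fun i => hτ i ℓ)
        ((Fintype.sum_nonneg fun i => hτ i ℓ).lt_of_ne (Ne.symm h))
  · ext i ℓ
    simp only [jointLaw]
    split_ifs with h
    · rw [h, zero_mul]
      rw [hξ] at h
      exact (congrFun ((Fintype.sum_eq_zero_iff_of_nonneg fun i => hτ i ℓ).1 h) i).symm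
    · simp [mul_inv_cancel_left₀ h]

end JointLaw

section JointValue

variable {K I J : Type*} [Fintype K] [Fintype I]

def jointValue (M : Matrix K K ℝ) (G : K → I → J → ℝ) (δ : ℝ) (f : (K → ℝ) → ℝ)
    (τ : I → K → ℝ) : ℝ :=
  (1 - δ) * (⨅ j, ∑ i, ∑ ℓ, τ i ℓ * G ℓ i j) +
    δ * ∑ i, perspective (fun η => f (Matrix.vecMul η M)) (τ i)

theorem jointValue_smul (M : Matrix K K ℝ) (G : K → I → J → ℝ) (δ : ℝ) (f : (K → ℝ) → ℝ)
    {c : ℝ} (hc : 0 ≤ c) (τ : I → K → ℝ) :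
    jointValue M G δ f (c • τ) = c * jointValue M G δ f τ := by
  simp only [jointValue, Pi.smul_apply, perspective_smul _ hc, smul_eq_mul, mul_assoc,
    ← Finset.mul_sum, ← Real.mul_iInf_of_nonneg hc]
  ring

theorem jointValue_add_le [Fintype J] [Nonempty J] {M : Matrix K K ℝ} (hM : IsStochastic M)
    (G : K → I → J → ℝ) {δ : ℝ} (hδ₀ : 0 ≤ δ) (hδ₁ : δ ≤ 1) {f : (K → ℝ) → ℝ}
    (hf : ConcaveOn ℝ (stdSimplex ℝ K) f) {τ σ : I → K → ℝ} (hτ : ∀ i, 0 ≤ τ i)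
    (hσ : ∀ i, 0 ≤ σ i) :
    jointValue M G δ f τ + jointValue M G δ f σ ≤ jointValue M G δ f (τ + σ) := by
  have hpayoff : (⨅ j, ∑ i, ∑ ℓ, τ i ℓ * G ℓ i j) + (⨅ j, ∑ i, ∑ ℓ, σ i ℓ * G ℓ i j) ≤
      ⨅ j, ∑ i, ∑ ℓ, (τ + σ) i ℓ * G ℓ i j := by
    refine le_ciInf fun j => ?_
    simp only [Pi.add_apply, add_mul, Finset.sum_add_distrib]
    exact add_le_add (ciInf_le (Finite.bddBelow_range _) j) (ciInf_le (Finite.bddBelow_range _) j)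
  have hcont : ∑ i, perspective (fun η => f (Matrix.vecMul η M)) (τ i) +
      ∑ i, perspective (fun η => f (Matrix.vecMul η M)) (σ i) ≤
      ∑ i, perspective (fun η => f (Matrix.vecMul η M)) ((τ + σ) i) := by
    rw [← Finset.sum_add_distrib]
    exact Finset.sum_le_sum fun i _ => (hf.comp_vecMul hM).perspective_add_le (hτ i) (hσ i)
  unfold jointValue
  have := mul_le_mul_of_nonneg_left hpayoff (sub_nonneg.2 hδ₁)
  have := mul_le_mul_of_nonneg_left hcont hδ₀
  linarith

end JointValue

section StageValue

variable {K I J : Type*} [Fintype K] [Fintype I] [Fintype J] [Nonempty J]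

def continuation (M : Matrix K K ℝ) (f : (K → ℝ) → ℝ) (ξ : K → ℝ) (χ : K → I → ℝ) : ℝ :=
  ∑ i, actionProb ξ χ i * f (Matrix.vecMul (posterior ξ χ i) M)

def stageValue (M : Matrix K K ℝ) (G : K → I → J → ℝ) (δ : ℝ) (f : (K → ℝ) → ℝ)
    (ξ : K → ℝ) (χ : K → I → ℝ) : ℝ :=
  (1 - δ) * onestagePayoff G ξ χ + δ * continuation M f ξ χ

def bellman (M : Matrix K K ℝ) (G : K → I → J → ℝ) (δ : ℝ) (f : (K → ℝ) → ℝ)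
    (ξ : K → ℝ) : ℝ :=
  sSup {x | ∃ χ : K → I → ℝ, (∀ ℓ, χ ℓ ∈ stdSimplex ℝ I) ∧ x = stageValue M G δ f ξ χ}

theorem continuation_eq_sum_perspective (M : Matrix K K ℝ) (f : (K → ℝ) → ℝ) (ξ : K → ℝ)
    (χ : K → I → ℝ) :
    continuation M f ξ χ =
      ∑ i, perspective (fun η => f (Matrix.vecMul η M)) (jointLaw ξ χ i) := by
  refine Finset.sum_congr rfl fun i _ => ?_
  have : posterior ξ χ i = (actionProb ξ χ i)⁻¹ • jointLaw ξ χ i := by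
    ext ℓ
    simp [posterior, jointLaw, div_eq_inv_mul]
  rw [this]
  rfl

theorem onestagePayoff_eq (G : K → I → J → ℝ) (ξ : K → ℝ) (χ : K → I → ℝ) :
    onestagePayoff G ξ χ = ⨅ j, ∑ i, ∑ ℓ, jointLaw ξ χ i ℓ * G ℓ i j := by
  simp only [onestagePayoff, jointLaw, Finset.mul_sum, mul_assoc]
  exact congrArg _ (funext fun j => Finset.sum_comm)

theorem stageValue_eq_jointValue (M : Matrix K K ℝ) (G : K → I → J → ℝ) (δ : ℝ)
    (f : (K → ℝ) → ℝ) (ξ : K → ℝ) (χ : K → I → ℝ) :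
    stageValue M G δ f ξ χ = jointValue M G δ f (jointLaw ξ χ) := by
  rw [stageValue, jointValue, onestagePayoff_eq, continuation_eq_sum_perspective]

theorem stageValue_one (M : Matrix K K ℝ) (G : K → I → J → ℝ) (f : (K → ℝ) → ℝ) (ξ : K → ℝ)
    (χ : K → I → ℝ) : stageValue M G 1 f ξ χ = continuation M f ξ χ := by
  simp [stageValue]

theorem continuation_le_continuation_add {M : Matrix K K ℝ} (hM : IsStochastic M)
    {f g : (K → ℝ) → ℝ} {B : ℝ} (hfg : ∀ η ∈ stdSimplex ℝ K, f η ≤ g η + B) {ξ : K → ℝ}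
    (hξ : ξ ∈ stdSimplex ℝ K) {χ : K → I → ℝ} (hχ : ∀ ℓ, χ ℓ ∈ stdSimplex ℝ I) :
    continuation M f ξ χ ≤ continuation M g ξ χ + B := by
  rw [continuation_eq_sum_perspective, continuation_eq_sum_perspective]
  calc ∑ i, perspective (fun η => f (Matrix.vecMul η M)) (jointLaw ξ χ i)
      ≤ ∑ i, (perspective (fun η => g (Matrix.vecMul η M)) (jointLaw ξ χ i) +
          (∑ ℓ, jointLaw ξ χ i ℓ) * B) :=
        Finset.sum_le_sum fun i _ => perspective_le_perspective_add
          (fun η hη => hfg _ (hM.vecMul_mem_stdSimplex hη)) (jointLaw_nonneg hξ hχ i)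
    _ = _ := by rw [Finset.sum_add_distrib, ← Finset.sum_mul, sum_sum_jointLaw hξ hχ, one_mul]

theorem continuation_zero (M : Matrix K K ℝ) (ξ : K → ℝ) (χ : K → I → ℝ) :
    continuation M (fun _ => 0) ξ χ = 0 := by
  simp [continuation]

theorem continuation_add (M : Matrix K K ℝ) (a b : ℝ) (f g : (K → ℝ) → ℝ) (ξ : K → ℝ)
    (χ : K → I → ℝ) :
    continuation M (fun η => a * f η + b * g η) ξ χ =
      a * continuation M f ξ χ + b * continuation M g ξ χ := by
  simp only [continuation, Finset.mul_sum, ← Finset.sum_add_distrib]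
  exact Finset.sum_congr rfl fun i _ => by ring

theorem onestagePayoff_le {G : K → I → J → ℝ} {C : ℝ} (hGC : ∀ ℓ i j, G ℓ i j ≤ C)
    {ξ : K → ℝ} (hξ : ξ ∈ stdSimplex ℝ K) {χ : K → I → ℝ} (hχ : ∀ ℓ, χ ℓ ∈ stdSimplex ℝ I) :
    onestagePayoff G ξ χ ≤ C := by
  obtain ⟨j⟩ := ‹Nonempty J›
  rw [onestagePayoff_eq]
  calc ⨅ j, ∑ i, ∑ ℓ, jointLaw ξ χ i ℓ * G ℓ i j
      ≤ ∑ i, ∑ ℓ, jointLaw ξ χ i ℓ * G ℓ i j := ciInf_le (Finite.bddBelow_range _) j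
    _ ≤ ∑ i, ∑ ℓ, jointLaw ξ χ i ℓ * C := by
        gcongr with i _ ℓ
        exacts [jointLaw_nonneg hξ hχ i ℓ, hGC ℓ i j]
    _ = C := by simp only [← Finset.sum_mul, sum_sum_jointLaw hξ hχ, one_mul]

theorem stageValue_le_bellman {M : Matrix K K ℝ} (hM : IsStochastic M) (G : K → I → J → ℝ)
    {δ : ℝ} (hδ₀ : 0 ≤ δ) (hδ₁ : δ ≤ 1) {f : (K → ℝ) → ℝ}
    (hf : BddAbove (f '' stdSimplex ℝ K)) {ξ : K → ℝ} (hξ : ξ ∈ stdSimplex ℝ K)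
    {χ : K → I → ℝ} (hχ : ∀ ℓ, χ ℓ ∈ stdSimplex ℝ I) :
    stageValue M G δ f ξ χ ≤ bellman M G δ f ξ := by
  obtain ⟨B, hB⟩ := hf
  obtain ⟨C, hC⟩ := Finite.bddAbove_range fun p : K × I × J => G p.1 p.2.1 p.2.2
  refine le_csSup ⟨(1 - δ) * C + δ * B, ?_⟩ ⟨χ, hχ, rfl⟩
  rintro _ ⟨χ', hχ', rfl⟩
  have hr := onestagePayoff_le (fun ℓ i j => hC ⟨(ℓ, i, j), rfl⟩) hξ hχ'
  have hcont := continuation_le_continuation_add hM (g := fun _ => 0)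
    (fun η hη => by simpa using hB ⟨η, hη, rfl⟩) hξ hχ'
  rw [continuation_zero, zero_add] at hcont
  exact add_le_add (mul_le_mul_of_nonneg_left hr (sub_nonneg.2 hδ₁))
    (mul_le_mul_of_nonneg_left hcont hδ₀)

theorem bellman_le [Nonempty I] {M : Matrix K K ℝ} {G : K → I → J → ℝ} {δ : ℝ}
    {f : (K → ℝ) → ℝ} {ξ : K → ℝ} {b : ℝ}
    (h : ∀ χ : K → I → ℝ, (∀ ℓ, χ ℓ ∈ stdSimplex ℝ I) → stageValue M G δ f ξ χ ≤ b) :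
    bellman M G δ f ξ ≤ b := by
  obtain ⟨χ, hχ⟩ := exists_strategy (K := K) (I := I)
  refine csSup_le ⟨_, χ, hχ, rfl⟩ ?_
  rintro _ ⟨χ, hχ, rfl⟩
  exact h χ hχ

end StageValue

section BellmanOperator

variable {K I J : Type*} [Fintype K] [Fintype I] [Nonempty I] [Fintype J] [Nonempty J]
  {M : Matrix K K ℝ} {G : K → I → J → ℝ} {δ : ℝ}

theorem bellman_le_bellman_add (hM : IsStochastic M) (hδ₀ : 0 ≤ δ) (hδ₁ : δ ≤ 1)
    {f g : (K → ℝ) → ℝ} (hg : BddAbove (g '' stdSimplex ℝ K)) {B : ℝ}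
    (hfg : ∀ η ∈ stdSimplex ℝ K, f η ≤ g η + B) {ξ : K → ℝ} (hξ : ξ ∈ stdSimplex ℝ K) :
    bellman M G δ f ξ ≤ bellman M G δ g ξ + δ * B :=
  bellman_le fun χ hχ => by
    have hcont := mul_le_mul_of_nonneg_left (continuation_le_continuation_add hM hfg hξ hχ) hδ₀
    have hg := stageValue_le_bellman hM G hδ₀ hδ₁ hg hξ hχ
    simp only [stageValue] at hg ⊢
    linarith

theorem abs_bellman_sub_bellman_le (hM : IsStochastic M) (hδ₀ : 0 ≤ δ) (hδ₁ : δ ≤ 1)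
    {f g : (K → ℝ) → ℝ} (hf : BddAbove (f '' stdSimplex ℝ K))
    (hg : BddAbove (g '' stdSimplex ℝ K)) {B : ℝ}
    (hfg : ∀ η ∈ stdSimplex ℝ K, |f η - g η| ≤ B) {ξ : K → ℝ} (hξ : ξ ∈ stdSimplex ℝ K) :
    |bellman M G δ f ξ - bellman M G δ g ξ| ≤ δ * B := by
  rw [abs_sub_le_iff]
  constructor
  · linarith [bellman_le_bellman_add (G := G) (f := f) (B := B) hM hδ₀ hδ₁ hg
      (fun η hη => by linarith [(abs_sub_le_iff.1 (hfg η hη)).1]) hξ]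
  · linarith [bellman_le_bellman_add (G := G) (f := g) (B := B) hM hδ₀ hδ₁ hf
      (fun η hη => by linarith [(abs_sub_le_iff.1 (hfg η hη)).2]) hξ]

theorem concaveOn_bellman (hM : IsStochastic M) (hδ₀ : 0 ≤ δ) (hδ₁ : δ ≤ 1)
    {f : (K → ℝ) → ℝ} (hf_bdd : BddAbove (f '' stdSimplex ℝ K))
    (hf : ConcaveOn ℝ (stdSimplex ℝ K) f) :
    ConcaveOn ℝ (stdSimplex ℝ K) (bellman M G δ f) := by
  refine ⟨convex_stdSimplex ℝ K, fun ξ₁ hξ₁ ξ₂ hξ₂ a b ha hb hab => ?_⟩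
  have hξ := convex_stdSimplex ℝ K hξ₁ hξ₂ ha hb hab
  obtain ⟨χ₀, hχ₀⟩ := exists_strategy (K := K) (I := I)
  simp only [smul_eq_mul]
  conv_lhs => rw [bellman, bellman]
  refine Real.mul_sSup_add_mul_sSup_le ?_ ?_ ha hb ?_
  · exact ⟨_, χ₀, hχ₀, rfl⟩
  · exact ⟨_, χ₀, hχ₀, rfl⟩
  rintro _ ⟨χ₁, hχ₁, rfl⟩ _ ⟨χ₂, hχ₂, rfl⟩
  -- the strategy mixing `χ₁` and `χ₂` generates the mixed joint law of state and action
  set τ := a • jointLaw ξ₁ χ₁ + b • jointLaw ξ₂ χ₂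
  have hτ : ∀ i, 0 ≤ τ i := fun i => add_nonneg
    (smul_nonneg ha (jointLaw_nonneg hξ₁ hχ₁ i)) (smul_nonneg hb (jointLaw_nonneg hξ₂ hχ₂ i))
  have hτξ : ∑ i, τ i = a • ξ₁ + b • ξ₂ := by
    simp only [τ, Pi.add_apply, Pi.smul_apply, Finset.sum_add_distrib, ← Finset.smul_sum,
      sum_jointLaw hχ₁, sum_jointLaw hχ₂]
  obtain ⟨χ, hχ, hχτ⟩ := exists_jointLaw_eq hτ
  rw [hτξ] at hχτ
  calc a * stageValue M G δ f ξ₁ χ₁ + b * stageValue M G δ f ξ₂ χ₂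
      = jointValue M G δ f (a • jointLaw ξ₁ χ₁) + jointValue M G δ f (b • jointLaw ξ₂ χ₂) := by
        rw [jointValue_smul _ _ _ _ ha, jointValue_smul _ _ _ _ hb, stageValue_eq_jointValue,
          stageValue_eq_jointValue]
    _ ≤ jointValue M G δ f τ :=
        jointValue_add_le hM G hδ₀ hδ₁ hf
          (fun i => smul_nonneg ha (jointLaw_nonneg hξ₁ hχ₁ i))
          (fun i => smul_nonneg hb (jointLaw_nonneg hξ₂ hχ₂ i))
    _ = stageValue M G δ f (a • ξ₁ + b • ξ₂) χ := by rw [stageValue_eq_jointValue, hχτ]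
    _ ≤ bellman M G δ f (a • ξ₁ + b • ξ₂) := stageValue_le_bellman hM G hδ₀ hδ₁ hf_bdd hξ hχ

theorem bellman_one_le_of_concaveOn (hM : IsStochastic M) {f : (K → ℝ) → ℝ}
    (hf : ConcaveOn ℝ (stdSimplex ℝ K) f) {ξ : K → ℝ} (hξ : ξ ∈ stdSimplex ℝ K) :
    bellman M G 1 f ξ ≤ f (Matrix.vecMul ξ M) :=
  bellman_le fun χ hχ => by
    rw [stageValue_one, continuation_eq_sum_perspective]
    calc ∑ i, perspective (fun η => f (Matrix.vecMul η M)) (jointLaw ξ χ i)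
        ≤ perspective (fun η => f (Matrix.vecMul η M)) (∑ i, jointLaw ξ χ i) :=
          (hf.comp_vecMul hM).sum_perspective_le _ fun i _ => jointLaw_nonneg hξ hχ i
      _ = f (Matrix.vecMul ξ M) := by
          rw [sum_jointLaw hχ, perspective_of_mem_stdSimplex _ hξ]

theorem bellman_one_mapsTo (hM : IsStochastic M) {f : (K → ℝ) → ℝ} {B : ℝ}
    (hf : MapsTo f (stdSimplex ℝ K) (Icc 0 B)) :
    MapsTo (bellman M G 1 f) (stdSimplex ℝ K) (Icc 0 B) := by
  intro ξ hξ
  have hcont : ∀ χ : K → I → ℝ, (∀ ℓ, χ ℓ ∈ stdSimplex ℝ I) →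
      0 ≤ stageValue M G 1 f ξ χ ∧ stageValue M G 1 f ξ χ ≤ B := fun χ hχ => by
    rw [stageValue_one]
    constructor
    · simpa [continuation_zero] using continuation_le_continuation_add hM (f := fun _ => 0)
        (g := f) (B := 0) (fun η hη => by simpa using (hf hη).1) hξ hχ
    · simpa [continuation_zero] using continuation_le_continuation_add hM (f := f)
        (g := fun _ => 0) (B := B) (fun η hη => by simpa using (hf hη).2) hξ hχ
  obtain ⟨χ, hχ⟩ := exists_strategy (K := K) (I := I)
  exact ⟨(hcont χ hχ).1.trans
      (stageValue_le_bellman hM G zero_le_one le_rfl (bddAbove_Icc.mono hf.image_subset) hξ hχ),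
    bellman_le fun χ hχ => (hcont χ hχ).2⟩

theorem le_of_le_bellman_of_bellman_le (hM : IsStochastic M) (hδ₀ : 0 ≤ δ) (hδ₁ : δ < 1)
    {W g : (K → ℝ) → ℝ} (hW : ∀ ξ ∈ stdSimplex ℝ K, W ξ ≤ bellman M G δ W ξ)
    (hg : ∀ ξ ∈ stdSimplex ℝ K, bellman M G δ g ξ ≤ g ξ)
    (hg_bdd : BddAbove (g '' stdSimplex ℝ K))
    (hWg : BddAbove ((fun ξ => W ξ - g ξ) '' stdSimplex ℝ K))
    {ξ : K → ℝ} (hξ : ξ ∈ stdSimplex ℝ K) : W ξ ≤ g ξ := by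
  set m := sSup ((fun ξ => W ξ - g ξ) '' stdSimplex ℝ K)
  have hm : ∀ η ∈ stdSimplex ℝ K, W η ≤ g η + m := fun η hη => by
    linarith [le_csSup hWg ⟨η, hη, rfl⟩]
  have hm_le : m ≤ δ * m := csSup_le ⟨_, ξ, hξ, rfl⟩ <| by
    rintro _ ⟨η, hη, rfl⟩
    linarith [hW η hη, hg η hη, bellman_le_bellman_add (G := G) hM hδ₀ hδ₁.le hg_bdd hm hη]
  have hm_nonpos : m ≤ 0 := by nlinarith
  linarith [hm ξ hξ]

theorem concaveOn_of_bellman_eq (hM : IsStochastic M) (hδ₀ : 0 ≤ δ) (hδ₁ : δ < 1)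
    {W : (K → ℝ) → ℝ} {C : ℝ} (hW_bdd : MapsTo W (stdSimplex ℝ K) (Icc 0 C))
    (hW : ∀ ξ ∈ stdSimplex ℝ K, W ξ = bellman M G δ W ξ) :
    ConcaveOn ℝ (stdSimplex ℝ K) W := by
  set F : ℕ → (K → ℝ) → ℝ := fun n => (bellman M G δ)^[n] fun _ => 0
  have hF_succ : ∀ n, F (n + 1) = bellman M G δ (F n) := fun n =>
    Function.iterate_succ_apply' _ _ _
  have hW_bdd' : BddAbove (W '' stdSimplex ℝ K) := bddAbove_Icc.mono hW_bdd.image_subset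
  have hF_bdd : ∀ n, (∀ ξ ∈ stdSimplex ℝ K, |W ξ - F n ξ| ≤ δ ^ n * C) →
      BddAbove (F n '' stdSimplex ℝ K) := fun n h => ⟨C + δ ^ n * C, by
    rintro _ ⟨η, hη, rfl⟩
    linarith [(abs_sub_le_iff.1 (h η hη)).2, (hW_bdd hη).2]⟩
  have hdist : ∀ n, ∀ ξ ∈ stdSimplex ℝ K, |W ξ - F n ξ| ≤ δ ^ n * C := by
    intro n
    induction n with
    | zero =>
      intro ξ hξ
      simpa [F, abs_of_nonneg (hW_bdd hξ).1] using (hW_bdd hξ).2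
    | succ n ih =>
      intro ξ hξ
      rw [hF_succ, hW ξ hξ, pow_succ', mul_assoc]
      exact abs_bellman_sub_bellman_le hM hδ₀ hδ₁.le hW_bdd' (hF_bdd n ih)
        ih hξ
  have hF_concave : ∀ n, ConcaveOn ℝ (stdSimplex ℝ K) (F n) := by
    intro n
    induction n with
    | zero => exact concaveOn_const _ (convex_stdSimplex ℝ K)
    | succ n ih =>
      rw [hF_succ]
      exact concaveOn_bellman hM hδ₀ hδ₁.le (hF_bdd n (hdist n)) ih
  exact ConcaveOn.of_forall_abs_sub_le hδ₀ hδ₁ hF_concave hdist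

end BellmanOperator

section RevelationIterate

variable {K I J : Type*} [Fintype K] [Fintype I] [Nonempty I] [Fintype J] [Nonempty J]
  {M : Matrix K K ℝ} {G : K → I → J → ℝ}

def revelationIterate (M : Matrix K K ℝ) (G : K → I → J → ℝ) (δ C : ℝ) (U : (K → ℝ) → ℝ) :
    ℕ → (K → ℝ) → ℝ
  | 0 => fun _ => C
  | m + 1 => bellman M G 1 fun η => (1 - δ) * U η + δ * revelationIterate M G δ C U m η

variable {δ C : ℝ} {U : (K → ℝ) → ℝ}

theorem revelationIterate_mapsTo (hM : IsStochastic M) (hδ₀ : 0 ≤ δ) (hδ₁ : δ ≤ 1)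
    (hC : 0 ≤ C) (hU : MapsTo U (stdSimplex ℝ K) (Icc 0 C)) (m : ℕ) :
    MapsTo (revelationIterate M G δ C U m) (stdSimplex ℝ K) (Icc 0 C) := by
  induction m with
  | zero => exact fun _ _ => ⟨hC, le_rfl⟩
  | succ m ih => exact bellman_one_mapsTo hM (hU.convex_comb_Icc ih hδ₀ hδ₁)

theorem revelationIterate_succ_le (hM : IsStochastic M) (hδ₀ : 0 ≤ δ) (hδ₁ : δ ≤ 1)
    (hC : 0 ≤ C) (hU : MapsTo U (stdSimplex ℝ K) (Icc 0 C)) (m : ℕ) {ξ : K → ℝ}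
    (hξ : ξ ∈ stdSimplex ℝ K) :
    revelationIterate M G δ C U (m + 1) ξ ≤ revelationIterate M G δ C U m ξ := by
  induction m generalizing ξ with
  | zero => exact (revelationIterate_mapsTo hM hδ₀ hδ₁ hC hU 1 hξ).2
  | succ m ih =>
    have hmono := bellman_le_bellman_add (G := G) (B := 0) hM zero_le_one le_rfl
      (f := fun η => (1 - δ) * U η + δ * revelationIterate M G δ C U (m + 1) η)
      (bddAbove_Icc.mono
        (hU.convex_comb_Icc (revelationIterate_mapsTo hM hδ₀ hδ₁ hC hU m) hδ₀ hδ₁).image_subset)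
      (fun η hη => by nlinarith [ih hη]) hξ
    rwa [mul_zero, add_zero] at hmono

theorem concaveOn_revelationIterate (hM : IsStochastic M) (hδ₀ : 0 ≤ δ) (hδ₁ : δ ≤ 1)
    (hC : 0 ≤ C) (hU : MapsTo U (stdSimplex ℝ K) (Icc 0 C))
    (hU_concave : ConcaveOn ℝ (stdSimplex ℝ K) U) (m : ℕ) :
    ConcaveOn ℝ (stdSimplex ℝ K) (revelationIterate M G δ C U m) := by
  induction m with
  | zero => exact concaveOn_const _ (convex_stdSimplex ℝ K)
  | succ m ih =>
    exact concaveOn_bellman hM zero_le_one le_rfl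
      (bddAbove_Icc.mono
        (hU.convex_comb_Icc (revelationIterate_mapsTo hM hδ₀ hδ₁ hC hU m) hδ₀ hδ₁).image_subset)
      ((hU_concave.smul (sub_nonneg.2 hδ₁)).add (ih.smul hδ₀))

theorem revelationIterate_le_of_vecMul_eq (hM : IsStochastic M) (hδ₀ : 0 ≤ δ) (hδ₁ : δ ≤ 1)
    (hC : 0 ≤ C) (hU : MapsTo U (stdSimplex ℝ K) (Icc 0 C))
    (hU_concave : ConcaveOn ℝ (stdSimplex ℝ K) U) {π : K → ℝ} (hπ : π ∈ stdSimplex ℝ K)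
    (hπM : Matrix.vecMul π M = π) (m : ℕ) :
    revelationIterate M G δ C U m π ≤ U π + δ ^ m * C := by
  induction m with
  | zero => simpa [revelationIterate] using (hU hπ).1
  | succ m ih =>
    have hjensen := bellman_one_le_of_concaveOn (G := G) hM
      ((hU_concave.smul (sub_nonneg.2 hδ₁)).add
        ((concaveOn_revelationIterate (G := G) hM hδ₀ hδ₁ hC hU hU_concave m).smul hδ₀)) hπ
    rw [hπM] at hjensen
    calc revelationIterate M G δ C U (m + 1) π
        ≤ (1 - δ) * U π + δ * revelationIterate M G δ C U m π := hjensen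
      _ ≤ (1 - δ) * U π + δ * (U π + δ ^ m * C) := by gcongr
      _ = U π + δ ^ (m + 1) * C := by ring

theorem bellman_mix_le (hM : IsStochastic M) {δ₁ δ₂ e C : ℝ} (hδ₁₀ : 0 ≤ δ₁) (hδ₁ : δ₁ ≤ 1)
    (hδ₂₀ : 0 ≤ δ₂) (hδ₂ : δ₂ ≤ 1) (he₀ : 0 ≤ e) (he₁ : e ≤ 1)
    (he : e * (1 - δ₁) = δ₂ - δ₁) {U k : (K → ℝ) → ℝ}
    (hU : MapsTo U (stdSimplex ℝ K) (Icc 0 C))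
    (hU_super : ∀ ξ ∈ stdSimplex ℝ K, bellman M G δ₁ U ξ ≤ U ξ)
    (hk : MapsTo k (stdSimplex ℝ K) (Icc 0 C)) {ξ : K → ℝ} (hξ : ξ ∈ stdSimplex ℝ K) :
    bellman M G δ₂ (fun η => (1 - e) * U η + e * k η) ξ ≤
      (1 - e) * U ξ + e * bellman M G 1 (fun η => (1 - δ₂) * U η + δ₂ * k η) ξ := by
  refine bellman_le fun χ hχ => ?_
  have hU_stage : stageValue M G δ₁ U ξ χ ≤ U ξ :=
    (stageValue_le_bellman hM G hδ₁₀ hδ₁ (bddAbove_Icc.mono hU.image_subset) hξ hχ).trans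
      (hU_super ξ hξ)
  have hk_stage := stageValue_le_bellman hM G zero_le_one le_rfl
    (bddAbove_Icc.mono (hU.convex_comb_Icc hk hδ₂₀ hδ₂).image_subset) hξ hχ
  rw [stageValue_one] at hk_stage
  -- as `1 - δ₂ = (1 - e) * (1 - δ₁)`, the whole stage payoff is absorbed by the inequality for `U`
  have hsplit : stageValue M G δ₂ (fun η => (1 - e) * U η + e * k η) ξ χ =
      (1 - e) * stageValue M G δ₁ U ξ χ +
        e * continuation M (fun η => (1 - δ₂) * U η + δ₂ * k η) ξ χ := by
    simp only [stageValue, continuation_add]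
    linear_combination (onestagePayoff G ξ χ - continuation M U ξ χ) * he
  rw [hsplit]
  exact add_le_add (mul_le_mul_of_nonneg_left hU_stage (sub_nonneg.2 he₁))
    (mul_le_mul_of_nonneg_left hk_stage he₀)

theorem le_mix_revelationIterate (hM : IsStochastic M) {δ₁ δ₂ e C : ℝ} (hδ₁₀ : 0 ≤ δ₁)
    (hδ₁ : δ₁ ≤ 1) (hδ₂₀ : 0 ≤ δ₂) (hδ₂ : δ₂ < 1) (he₀ : 0 ≤ e) (he₁ : e ≤ 1)
    (he : e * (1 - δ₁) = δ₂ - δ₁) (hC : 0 ≤ C) {U W : (K → ℝ) → ℝ}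
    (hU : MapsTo U (stdSimplex ℝ K) (Icc 0 C))
    (hU_super : ∀ ξ ∈ stdSimplex ℝ K, bellman M G δ₁ U ξ ≤ U ξ)
    (hW : MapsTo W (stdSimplex ℝ K) (Icc 0 C))
    (hW_sub : ∀ ξ ∈ stdSimplex ℝ K, W ξ ≤ bellman M G δ₂ W ξ) (m : ℕ) {ξ : K → ℝ}
    (hξ : ξ ∈ stdSimplex ℝ K) :
    W ξ ≤ (1 - e) * U ξ + e * revelationIterate M G δ₂ C U m ξ := by
  have hk := revelationIterate_mapsTo (G := G) hM hδ₂₀ hδ₂.le hC hU m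
  have hg := hU.convex_comb_Icc hk he₀ he₁
  refine le_of_le_bellman_of_bellman_le hM hδ₂₀ hδ₂ hW_sub (fun η hη => ?_)
    (bddAbove_Icc.mono hg.image_subset) ⟨C, ?_⟩ hξ
  · calc bellman M G δ₂ (fun η => (1 - e) * U η + e * revelationIterate M G δ₂ C U m η) η
        ≤ (1 - e) * U η + e * revelationIterate M G δ₂ C U (m + 1) η :=
          bellman_mix_le hM hδ₁₀ hδ₁ hδ₂₀ hδ₂.le he₀ he₁ he hU hU_super hk hη
      _ ≤ (1 - e) * U η + e * revelationIterate M G δ₂ C U m η := by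
          gcongr
          exact revelationIterate_succ_le hM hδ₂₀ hδ₂.le hC hU m hη
  · rintro _ ⟨η, hη, rfl⟩
    linarith [(hW hη).2, (hg hη).1]

end RevelationIterate

end MarkovChainGame

theorem IsGameValueFamily.mapsTo {K I J : Type*} [Fintype K] [Fintype I] [Fintype J]
    [Nonempty J] {M : Matrix K K ℝ} {G : K → I → J → ℝ} {C : ℝ}
    {V : ℝ → (K → ℝ) → ℝ} (hV : IsGameValueFamily M G C V) {δ : ℝ} (hδ : δ ∈ Ico 0 1) :
    MapsTo (V δ) (stdSimplex ℝ K) (Icc 0 C) :=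
  fun ξ hξ => (hV δ hδ).1 ξ hξ

theorem IsGameValueFamily.eq_bellman {K I J : Type*} [Fintype K] [Fintype I]
    [Fintype J] [Nonempty J] {M : Matrix K K ℝ} {G : K → I → J → ℝ} {C : ℝ}
    {V : ℝ → (K → ℝ) → ℝ} (hV : IsGameValueFamily M G C V) {δ : ℝ} (hδ : δ ∈ Ico 0 1)
    {ξ : K → ℝ} (hξ : ξ ∈ stdSimplex ℝ K) : V δ ξ = MarkovChainGame.bellman M G δ (V δ) ξ :=
  (hV δ hδ).2 ξ hξ

open MarkovChainGame in
theorem markov_chain_game_value_nonincreasing_at_invariant_general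
    {K I J : Type*} [Fintype K] [Fintype I] [Nonempty I]
    [Fintype J] [Nonempty J]
    (M : Matrix K K ℝ) (hM : IsStochastic M)
    (G : K → I → J → ℝ)
    (C : ℝ)
    (V : ℝ → (K → ℝ) → ℝ) (hV : IsGameValueFamily M G C V)
    (π : K → ℝ) (hπ : π ∈ stdSimplex ℝ K) (hπinv : Matrix.vecMul π M = π) :
    ∀ δ₁ δ₂ : ℝ, 0 ≤ δ₁ → δ₁ ≤ δ₂ → δ₂ < 1 → V δ₂ π ≤ V δ₁ π := by
  intro δ₁ δ₂ hδ₁₀ hδ₁₂ hδ₂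
  have hδ₁ : δ₁ ∈ Ico 0 1 := ⟨hδ₁₀, hδ₁₂.trans_lt hδ₂⟩
  have hδ₂' : δ₂ ∈ Ico 0 1 := ⟨hδ₁₀.trans hδ₁₂, hδ₂⟩
  have hC₀ : 0 ≤ C := (hV.mapsTo hδ₁ hπ).1.trans (hV.mapsTo hδ₁ hπ).2
  have hV₁_concave := concaveOn_of_bellman_eq hM hδ₁.1 hδ₁.2 (hV.mapsTo hδ₁)
    fun ξ hξ => hV.eq_bellman hδ₁ hξ
  set e := (δ₂ - δ₁) / (1 - δ₁)
  have h1δ₁ : 0 < 1 - δ₁ := sub_pos.2 hδ₁.2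
  have he : e * (1 - δ₁) = δ₂ - δ₁ := div_mul_cancel₀ _ h1δ₁.ne'
  have he₀ : 0 ≤ e := div_nonneg (sub_nonneg.2 hδ₁₂) h1δ₁.le
  have he₁ : e ≤ 1 := (div_le_one h1δ₁).2 (by linarith)
  refine le_of_forall_le_add_pow_mul hδ₂'.1 hδ₂ (B := e * C) fun m => ?_
  calc V δ₂ π ≤ (1 - e) * V δ₁ π + e * revelationIterate M G δ₂ C (V δ₁) m π :=
        le_mix_revelationIterate hM hδ₁₀ hδ₁.2.le hδ₂'.1 hδ₂ he₀ he₁ he hC₀ (hV.mapsTo hδ₁)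
          (fun ξ hξ => (hV.eq_bellman hδ₁ hξ).ge) (hV.mapsTo hδ₂')
          (fun ξ hξ => (hV.eq_bellman hδ₂' hξ).le) m hπ
    _ ≤ (1 - e) * V δ₁ π + e * (V δ₁ π + δ₂ ^ m * C) := by
        gcongr
        exact revelationIterate_le_of_vecMul_eq hM hδ₂'.1 hδ₂.le hC₀ (hV.mapsTo hδ₁)
          hV₁_concave hπ hπinv m
    _ = V δ₁ π + δ₂ ^ m * (e * C) := by ring

theorem markov_chain_game_value_nonincreasing_at_invariant
    {K I J : Type*} [Fintype K] [Nonempty K] [Fintype I] [Nonempty I]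
    [Fintype J] [Nonempty J]
    (M : Matrix K K ℝ) (hM : IsStochastic M)
    (G : K → I → J → ℝ) (hG : ∀ ℓ i j, 0 ≤ G ℓ i j)
    (C : ℝ) (hC : IsGreatest { x : ℝ | ∃ ℓ i j, x = G ℓ i j } C)
    (V : ℝ → (K → ℝ) → ℝ) (hV : IsGameValueFamily M G C V)
    (π : K → ℝ) (hπ : π ∈ stdSimplex ℝ K) (hπinv : Matrix.vecMul π M = π) :
    ∀ δ₁ δ₂ : ℝ, 0 ≤ δ₁ → δ₁ ≤ δ₂ → δ₂ < 1 → V δ₂ π ≤ V δ₁ π :=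
  markov_chain_game_value_nonincreasing_at_invariant_general M hM G C V hV π hπ hπinv
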